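/- arXiv:2411.07947 — 2 statements merged into one kernel-verified Lean document; each statement's English description precedes it below -/
import Mathlib

section
/- In dimension d = 1, let P = Unif([-1,1]) and Q = (δ_{-1} + δ_1)/2. The entropic map is T^ε(x) = tanh(2x/ε) and the Brenier map is T⁰(x) = sign(x). For φ(x) = sign(x)|x|^α with α ∈ (0,1], one has lim_{ε→0⁺} ε^{-1-α} ∫_{-1}^1 φ(x)(T^ε(x) - T⁰(x)) · (1/2) dx = ∫₀^∞ x^α (tanh(2x) - 1) dx, and this integral is absolutely convergent. -/
/-!
Substituting `x = ε y` and using that the integrand is even (`sign x (tanh (2x/ε) - sign x)` equals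
`tanh (2|x|/ε) - 1`), the rescaled integral `ε^{-1-α} ∫_{-1}^1 …` is exactly
`∫_0^{1/ε} y^α (tanh (2y) - 1) dy`. Since `|tanh y - 1| ≤ e^{-y}`, the integrand is dominated by
the integrable `y^α e^{-2y}`, and the partial integrals converge to the integral over `(0, ∞)`.
-/

open MeasureTheory Real Set Filter

namespace Real

@[fun_prop]
theorem continuous_tanh : Continuous tanh := by
  simp only [funext tanh_eq_sinh_div_cosh]
  exact continuous_sinh.div continuous_cosh fun x => (cosh_pos x).ne'

theorem abs_tanh_sub_one_le_exp_neg (y : ℝ) : |tanh y - 1| ≤ exp (-y) := by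
  have hcosh : 1 ≤ cosh y := one_le_cosh y
  have h : tanh y - 1 = -(exp (-y) / cosh y) := by
    rw [tanh_eq_sinh_div_cosh, ← cosh_sub_sinh]
    field_simp
    ring
  rw [h, abs_neg, abs_of_nonneg (by positivity)]
  exact div_le_self (exp_pos _).le hcosh

end Real

theorem integrableOn_rpow_mul_tanh_mul_sub_one {s c : ℝ} (hs : -1 < s) (hc : 0 < c) :
    IntegrableOn (fun x : ℝ => x ^ s * (tanh (c * x) - 1)) (Ioi 0) := by
  have hdom := integrableOn_rpow_mul_exp_neg_mul_rpow hs one_pos hc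
  refine hdom.mono' ?_ ?_
  · refine ContinuousOn.aestronglyMeasurable (fun x hx => ?_) measurableSet_Ioi
    have htanh : Continuous fun x => tanh (c * x) - 1 := by fun_prop
    exact ((continuousAt_rpow_const x s (Or.inl hx.ne')).mul
      htanh.continuousAt).continuousWithinAt
  · filter_upwards [ae_restrict_mem measurableSet_Ioi] with x (hx : 0 < x)
    rw [norm_mul, norm_of_nonneg (rpow_nonneg hx.le s), norm_eq_abs, rpow_one, neg_mul]
    exact mul_le_mul_of_nonneg_left (abs_tanh_sub_one_le_exp_neg _) (rpow_nonneg hx.le s)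

theorem Function.Odd.sign_mul_sub_sign {g : ℝ → ℝ} (hg : g.Odd) {x : ℝ} (hx : x ≠ 0) :
    sign x * (g x - sign x) = g |x| - 1 := by
  rcases hx.lt_or_gt with hneg | hpos
  · rw [sign_of_neg hneg, abs_of_neg hneg, hg]
    ring
  · rw [sign_of_pos hpos, abs_of_pos hpos]
    ring

theorem intervalIntegral.integral_comp_abs_neg_self {E : Type*} [NormedAddCommGroup E]
    [NormedSpace ℝ E] {f : ℝ → E} {a : ℝ} (ha : 0 ≤ a) (hf : IntervalIntegrable f volume 0 a) :
    ∫ x in -a..a, f |x| = (2 : ℝ) • ∫ x in 0..a, f x := by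
  have habs : EqOn (fun x => f |x|) f (uIcc 0 a) := fun x hx => by
    rw [uIcc_of_le ha] at hx
    simp only [abs_of_nonneg hx.1]
  have hright : IntervalIntegrable (fun x => f |x|) volume 0 a :=
    hf.congr (habs.symm.mono Ioc_subset_Icc_self)
  have hleft : IntervalIntegrable (fun x => f |x|) volume (-a) 0 := by
    simpa using ((IntervalIntegrable.iff_comp_neg (f := fun x => f |x|)).mp hright).symm
  have hreflect : ∫ x in -a..0, f |x| = ∫ x in 0..a, f |x| := by
    simpa using (integral_comp_neg (a := 0) (b := a) (fun x => f |x|)).symm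
  rw [← integral_add_adjacent_intervals hleft hright, hreflect, integral_congr habs, two_smul]

theorem intervalIntegral.integral_rpow_mul_comp_div {g : ℝ → ℝ} {s b c : ℝ} (hb : 0 ≤ b)
    (hc : 0 < c) :
    ∫ x in 0..b, x ^ s * g (x / c) = c ^ (s + 1) * ∫ y in 0..b / c, y ^ s * g y := by
  have hscale : EqOn (fun x => x ^ s * g (x / c)) (fun x => c ^ s * ((x / c) ^ s * g (x / c)))
      (uIcc 0 b) := fun x hx => by
    rw [uIcc_of_le hb] at hx
    simp only [div_rpow hx.1 hc.le]
    field_simp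
  rw [integral_congr hscale, integral_const_mul, integral_comp_div (fun y => y ^ s * g y) hc.ne',
    zero_div, smul_eq_mul, rpow_add_one hc.ne']
  ring

theorem integral_sign_mul_rpow_mul_tanh_sub_sign {α ε : ℝ} (hα : 0 ≤ α) (hε : 0 < ε) :
    ∫ x in (-1 : ℝ)..1, (sign x * |x| ^ α) * (tanh (2 * x / ε) - sign x) * (1 / 2) =
      ε ^ (1 + α) * ∫ y in (0 : ℝ)..ε⁻¹, y ^ α * (tanh (2 * y) - 1) := by
  set h : ℝ → ℝ := fun y => (1 / 2) * (y ^ α * (tanh (2 * (y / ε)) - 1))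
  have hodd : Function.Odd fun x => tanh (2 * x / ε) := fun x => by
    simp only [mul_neg, neg_div, tanh_neg]
  have hfold : ∀ x ≠ 0,
      (sign x * |x| ^ α) * (tanh (2 * x / ε) - sign x) * (1 / 2) = h |x| := fun x hx => by
    rw [mul_comm (sign x), mul_assoc (|x| ^ α), hodd.sign_mul_sub_sign hx, mul_div_assoc]
    ring
  have hh : Continuous h := by fun_prop (disch := assumption)
  calc ∫ x in (-1 : ℝ)..1, (sign x * |x| ^ α) * (tanh (2 * x / ε) - sign x) * (1 / 2)
      = ∫ x in (-1 : ℝ)..1, h |x| := by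
        exact intervalIntegral.integral_congr_ae ((volume.ae_ne 0).mono fun x hx _ => hfold x hx)
    _ = (2 : ℝ) • ∫ y in (0 : ℝ)..1, h y :=
        intervalIntegral.integral_comp_abs_neg_self zero_le_one (hh.intervalIntegrable 0 1)
    _ = ε ^ (1 + α) * ∫ y in (0 : ℝ)..ε⁻¹, y ^ α * (tanh (2 * y) - 1) := by
        rw [intervalIntegral.integral_const_mul,
          intervalIntegral.integral_rpow_mul_comp_div (g := fun y => tanh (2 * y) - 1)
            zero_le_one hε,
          one_div ε, add_comm α 1, smul_eq_mul]
        ring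

theorem one_dim_sharpness (α : ℝ) (hα : α ∈ Set.Ioc (0 : ℝ) 1) :
    Filter.Tendsto
      (fun ε : ℝ => ε ^ (-(1 + α)) *
        ∫ x in (-1 : ℝ)..1,
          (Real.sign x * |x| ^ α) * (Real.tanh (2 * x / ε) - Real.sign x) * (1 / 2))
      (nhdsWithin 0 (Set.Ioi 0))
      (nhds (∫ x in Set.Ioi (0 : ℝ), x ^ α * (Real.tanh (2 * x) - 1))) ∧
    IntegrableOn (fun x : ℝ => x ^ α * (Real.tanh (2 * x) - 1)) (Set.Ioi 0) := by
  have hint := integrableOn_rpow_mul_tanh_mul_sub_one (by linarith [hα.1]) two_pos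
  refine ⟨(intervalIntegral_tendsto_integral_Ioi 0 hint tendsto_inv_nhdsGT_zero).congr' ?_, hint⟩
  filter_upwards [self_mem_nhdsWithin] with ε (hε : 0 < ε)
  rw [integral_sign_mul_rpow_mul_tanh_sub_sign hα.1.le hε, ← mul_assoc, ← rpow_add hε,
    neg_add_cancel, rpow_zero, one_mul]
end

section
/- Let u, v ∈ ℝ^d be linearly independent, let X ⊂ ℝ^d be bounded with diameter D, and let a, b ∈ ℝ, η > 0. Then the set B = {x ∈ X : 0 ≤ ⟨u,x⟩ - a < η, 0 ≤ ⟨v,x⟩ - b < η} has d-dimensional Lebesgue measure at most D^{d-2} η² / √(‖u‖²‖v‖² - ⟨u,v⟩²). -/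
/-!
Gram–Schmidt applied to `u, v` gives orthonormal coordinates `x₀, …, x_{n+1}` in which
`⟪u, x⟫ = α x₀` and `⟪v, x⟫ = p x₀ + q x₁`; the Gram determinant of `u, v` is then `(α q)²`.
The remaining coordinates are 1-Lipschitz, so on `X` each ranges over an interval of length
`diam X`. Hence the set lies in the preimage of a box of volume `η² (diam X)ⁿ` under a linear map
of determinant `α q`, and that preimage has volume `η² (diam X)ⁿ / |α q|`.
-/
open MeasureTheory Metric Matrix Module InnerProductSpace
open scoped RealInnerProductSpace

theorem LipschitzWith.exists_mapsTo_Icc_diam {α : Type*} [PseudoMetricSpace α] {f : α → ℝ}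
    (hf : LipschitzWith 1 f) {X : Set α} (hX : Bornology.IsBounded X) :
    ∃ m, Set.MapsTo f X (Set.Icc m (m + diam X)) := by
  have hfX := hf.isBounded_image hX
  refine ⟨sInf (f '' X), fun x hx => ⟨csInf_le hfX.bddBelow ⟨x, hx, rfl⟩, ?_⟩⟩
  have hdiam : diam (f '' X) ≤ diam X := by simpa using hf.diam_image_le X hX
  calc f x ≤ sSup (f '' X) := le_csSup hfX.bddAbove ⟨x, hx, rfl⟩
    _ = sInf (f '' X) + diam (f '' X) := by rw [Real.diam_eq hfX]; ring
    _ ≤ sInf (f '' X) + diam X := by gcongr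

namespace Matrix

variable {n : ℕ}

/-- Rows `(α, 0, …)`, `(p, q, 0, …)`, then those of the identity; written as a diagonal matrix
times a transvection so that its determinant can be read off. -/
noncomputable def slabMatrix (n : ℕ) (α p q : ℝ) : Matrix (Fin (n + 2)) (Fin (n + 2)) ℝ :=
  diagonal (Fin.cons α (Fin.cons q 1)) * transvection 1 0 (p / q)

theorem det_slabMatrix (α p q : ℝ) : (slabMatrix n α p q).det = α * q := by
  simp [slabMatrix, det_transvection_of_ne, Fin.prod_univ_succ]

theorem slabMatrix_mulVec (α p : ℝ) {q : ℝ} (hq : q ≠ 0) (c : Fin (n + 2) → ℝ) :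
    slabMatrix n α p q *ᵥ c =
      Fin.cons (α * c 0) (Fin.cons (p * c 0 + q * c 1) fun i => c i.succ.succ) := by
  ext i
  refine Fin.cases ?_ (Fin.cases ?_ fun i => ?_) i
  all_goals simp [slabMatrix, ← mulVec_mulVec, transvection, add_mulVec, single_mulVec,
    mulVec_diagonal, Fin.succ_succ_ne_one]
  field_simp
  ring

end Matrix

section InnerProductSpace

variable {E : Type*} [NormedAddCommGroup E] [InnerProductSpace ℝ E]

theorem LinearIndependent.inner_sq_lt_norm_sq_mul_norm_sq {u v : E}
    (huv : LinearIndependent ℝ ![u, v]) : ⟪u, v⟫ ^ 2 < ‖u‖ ^ 2 * ‖v‖ ^ 2 := by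
  have h := (posDef_gram_of_linearIndependent huv).det_pos
  rw [det_fin_two] at h
  simpa [gram, real_inner_self_eq_norm_sq, real_inner_comm u v, sq] using h

variable {ι : Type*} [Fintype ι]

theorem OrthonormalBasis.lipschitzWith_repr_apply (b : OrthonormalBasis ι ℝ E) (i : ι) :
    LipschitzWith 1 fun x => b.repr x i := by
  have h := ((LipschitzWith.eval i).comp (PiLp.lipschitzWith_ofLp 2 _)).comp b.repr.lipschitz
  rwa [one_mul, one_mul] at h

theorem OrthonormalBasis.norm_sq_mul_norm_sq_sub_inner_sq [DecidableEq ι]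
    (b : OrthonormalBasis ι ℝ E) {i j : ι} (hij : i ≠ j) {u v : E} {α p q : ℝ}
    (hu : ∀ x, ⟪u, x⟫ = α * b.repr x i)
    (hv : ∀ x, ⟪v, x⟫ = p * b.repr x i + q * b.repr x j) :
    ‖u‖ ^ 2 * ‖v‖ ^ 2 - ⟪u, v⟫ ^ 2 = (α * q) ^ 2 := by
  have hbi : b.repr (b i) = EuclideanSpace.single i 1 := b.repr_self i
  have hbj : b.repr (b j) = EuclideanSpace.single j 1 := b.repr_self j
  have hui : ⟪b i, u⟫ = α := by
    rw [real_inner_comm, hu, hbi]; simp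
  have hvi : ⟪b i, v⟫ = p := by
    rw [real_inner_comm, hv, hbi]; simp [hij.symm]
  have hvj : ⟪b j, v⟫ = q := by
    rw [real_inner_comm, hv, hbj]; simp [hij]
  rw [← real_inner_self_eq_norm_sq, ← real_inner_self_eq_norm_sq, hu, hu, hv,
    b.repr_apply_apply, b.repr_apply_apply, b.repr_apply_apply, hui, hvi, hvj]
  ring

variable [FiniteDimensional ℝ E]

theorem exists_orthonormalBasis_inner_pair_eq {n : ℕ} (hE : finrank ℝ E = n + 2) (u v : E) :
    ∃ e : OrthonormalBasis (Fin (n + 2)) ℝ E, ∀ x,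
      ⟪u, x⟫ = ⟪u, e 0⟫ * e.repr x 0 ∧
        ⟪v, x⟫ = ⟪v, e 0⟫ * e.repr x 0 + ⟪v, e 1⟫ * e.repr x 1 := by
  let f : Fin (n + 2) → E := Fin.cons u fun _ => v
  let e := gramSchmidtOrthonormalBasis (by simpa using hE) f
  have hu : ∀ i ≠ 0, ⟪u, e i⟫ = 0 := fun i hi => by
    rw [real_inner_comm]
    exact gramSchmidtOrthonormalBasis_inv_triangular _ f (Fin.pos_iff_ne_zero.2 hi)
  have hv : ∀ i : Fin n, ⟪v, e i.succ.succ⟫ = 0 := fun i => by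
    rw [real_inner_comm]
    exact gramSchmidtOrthonormalBasis_inv_triangular (i := 1) _ f (Fin.one_lt_succ_succ i)
  refine ⟨e, fun x => ⟨?_, ?_⟩⟩
  · rw [← e.sum_inner_mul_inner u x, Fintype.sum_eq_single 0 fun i hi => by rw [hu i hi, zero_mul],
      e.repr_apply_apply]
  · rw [← e.sum_inner_mul_inner v x, Fin.sum_univ_succ, Fin.sum_univ_succ]
    simp [hv, e.repr_apply_apply]

variable [MeasurableSpace E] [BorelSpace E]

theorem OrthonormalBasis.volume_preimage_mulVec_repr [DecidableEq ι]
    (b : OrthonormalBasis ι ℝ E) {M : Matrix ι ι ℝ} (hM : M.det ≠ 0) (s : Set (ι → ℝ)) :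
    volume ((fun x => M *ᵥ (b.repr x).ofLp) ⁻¹' s) = ENNReal.ofReal |M.det⁻¹| * volume s := by
  have hφ := b.measurePreserving_measurableEquiv.trans
    (EuclideanSpace.volume_preserving_symm_measurableEquiv_toLp ι)
  have hM' : LinearMap.det (toLin' M) ≠ 0 := by rwa [LinearMap.det_toLin']
  rw [← LinearMap.det_toLin' M, ← Measure.addHaar_preimage_linearMap volume hM' s,
    ← hφ.measure_preimage_equiv]
  rfl

theorem volume_inter_slabs_le {n : ℕ} (hE : finrank ℝ E = n + 2) {u v : E}
    (huv : LinearIndependent ℝ ![u, v]) {X : Set E} (hX : Bornology.IsBounded X) (a b η : ℝ) :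
    volume {x ∈ X | (0 ≤ ⟪u, x⟫ - a ∧ ⟪u, x⟫ - a < η) ∧ (0 ≤ ⟪v, x⟫ - b ∧ ⟪v, x⟫ - b < η)}
      ≤ ENNReal.ofReal (diam X ^ n * η ^ 2 / √(‖u‖ ^ 2 * ‖v‖ ^ 2 - ⟪u, v⟫ ^ 2)) := by
  obtain ⟨e, he⟩ := exists_orthonormalBasis_inner_pair_eq hE u v
  set α := ⟪u, e 0⟫
  set p := ⟪v, e 0⟫
  set q := ⟪v, e 1⟫
  have hgram : ‖u‖ ^ 2 * ‖v‖ ^ 2 - ⟪u, v⟫ ^ 2 = (α * q) ^ 2 :=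
    e.norm_sq_mul_norm_sq_sub_inner_sq zero_ne_one (fun x => (he x).1) fun x => (he x).2
  have hαq : α * q ≠ 0 := by
    have := huv.inner_sq_lt_norm_sq_mul_norm_sq
    intro h
    rw [h] at hgram
    linarith
  choose m hm using fun i : Fin n =>
    (e.lipschitzWith_repr_apply i.succ.succ).exists_mapsTo_Icc_diam hX
  let box : Set (Fin (n + 2) → ℝ) := Set.univ.pi <| Fin.cons (Set.Ico a (a + η)) <|
    Fin.cons (Set.Ico b (b + η)) fun i => Set.Icc (m i) (m i + diam X)
  set φ := fun x => slabMatrix n α p q *ᵥ (e.repr x).ofLp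
  have hsub : {x ∈ X | (0 ≤ ⟪u, x⟫ - a ∧ ⟪u, x⟫ - a < η) ∧
      (0 ≤ ⟪v, x⟫ - b ∧ ⟪v, x⟫ - b < η)} ⊆ φ ⁻¹' box := by
    rintro x ⟨hx, ⟨hua, huη⟩, ⟨hvb, hvη⟩⟩
    simp only [φ, box, Set.mem_preimage, Set.mem_univ_pi, Fin.forall_fin_succ, Fin.cons_zero,
      Fin.cons_succ, slabMatrix_mulVec α p (right_ne_zero_of_mul hαq), ← (he x).1, ← (he x).2]
    exact ⟨⟨by linarith, by linarith⟩, ⟨by linarith, by linarith⟩, fun i => hm i hx⟩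
  calc _ ≤ volume (φ ⁻¹' box) := measure_mono hsub
    _ = .ofReal |(α * q)⁻¹| * (.ofReal η * (.ofReal η * .ofReal (diam X) ^ n)) := by
      rw [e.volume_preimage_mulVec_repr (by rwa [det_slabMatrix]), det_slabMatrix]
      simp [box, volume_pi_pi, Fin.prod_univ_succ, Real.volume_Ico, Real.volume_Icc]
    _ ≤ .ofReal |(α * q)⁻¹| * (.ofReal |η| * (.ofReal |η| * .ofReal (diam X) ^ n)) := by
      gcongr <;> exact le_abs_self η
    _ = _ := by
      rw [hgram, Real.sqrt_sq_eq_abs, ← ENNReal.ofReal_pow diam_nonneg,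
        ← ENNReal.ofReal_mul (abs_nonneg _), ← ENNReal.ofReal_mul (abs_nonneg _),
        ← ENNReal.ofReal_mul (abs_nonneg _), abs_inv, ← sq_abs η]
      ring_nf

end InnerProductSpace

theorem double_slab_volume_bound_general (d : ℕ) (u v : EuclideanSpace ℝ (Fin d))
    (huv : LinearIndependent ℝ ![u, v]) (X : Set (EuclideanSpace ℝ (Fin d)))
    (hX : Bornology.IsBounded X) (a b η : ℝ) :
    volume {x ∈ X | (0 ≤ ⟪u, x⟫ - a ∧ ⟪u, x⟫ - a < η) ∧
        (0 ≤ ⟪v, x⟫ - b ∧ ⟪v, x⟫ - b < η)}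
      ≤ ENNReal.ofReal (Metric.diam X ^ (d - 2) * η ^ 2 /
          Real.sqrt (‖u‖ ^ 2 * ‖v‖ ^ 2 - ⟪u, v⟫ ^ 2)) := by
  obtain ⟨n, rfl⟩ : ∃ n, d = n + 2 :=
    Nat.exists_eq_add_of_le' (by simpa using huv.fintype_card_le_finrank)
  simpa using volume_inter_slabs_le finrank_euclideanSpace_fin huv hX a b η

theorem double_slab_volume_bound (d : ℕ) (u v : EuclideanSpace ℝ (Fin d))
    (huv : LinearIndependent ℝ ![u, v]) (X : Set (EuclideanSpace ℝ (Fin d)))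
    (hX : Bornology.IsBounded X) (a b η : ℝ) (hη : 0 < η) :
    volume {x ∈ X | (0 ≤ ⟪u, x⟫ - a ∧ ⟪u, x⟫ - a < η) ∧
        (0 ≤ ⟪v, x⟫ - b ∧ ⟪v, x⟫ - b < η)}
      ≤ ENNReal.ofReal (Metric.diam X ^ (d - 2) * η ^ 2 /
          Real.sqrt (‖u‖ ^ 2 * ‖v‖ ^ 2 - ⟪u, v⟫ ^ 2)) :=
  double_slab_volume_bound_general d u v huv X hX a b η
end
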